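/- arXiv:math/9905077 — 5 statements merged into one kernel-verified Lean document; each statement's English description precedes it below -/
import Mathlib

section
/- Fix δ ∈ (1,2), s₀ > 0, and an integer n with |n| ≥ 2. If w is a C² function on [−s₀, s₀] satisfying w'' − n² w + (2/cosh² s) w = f with |f(s)| ≤ (cosh s)^δ and w(±s₀) = 0, then |w(s)| ≤ (cosh s)^δ/(n² − 2 − δ) for all s ∈ [−s₀, s₀]. -/
/-!
Put `C = n² − 2 − δ` and `V = cosh^δ`. Since `V'' = δ² V + δ(1 − δ) cosh^{δ−2}`, for `−1 ≤ δ ≤ 2`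
the supersolution inequality `V'' + (2 / cosh²) V ≤ (2 + δ) V` holds, so `g = V / C ∓ w` satisfies
`g'' ≤ (n² − 2 / cosh²) g` whenever `|L_n w| ≤ V`. The potential `n² − 2 / cosh²` is positive, so `g`
has no negative interior minimum (there `g'' ≥ 0 > (n² − 2 / cosh²) g`), and `g ≥ 0` at the endpoints.
-/

open Real Set
open Filter Topology

/-- If `f'' x < 0`, the second-derivative test makes `x` a local maximum as well, so `f` is locally
constant near `x`. -/
theorem IsLocalMin.deriv_deriv_nonneg {f : ℝ → ℝ} {x : ℝ} (hmin : IsLocalMin f x)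
    (hf : ContinuousAt f x) : 0 ≤ deriv (deriv f) x := by
  by_contra! hneg
  have hmax := isLocalMax_of_deriv_deriv_neg hneg hmin.deriv_eq_zero hf
  have hconst : f =ᶠ[𝓝 x] fun _ => f x := by
    filter_upwards [hmin, hmax] with y hy₁ hy₂ using le_antisymm hy₂ hy₁
  have hderiv : deriv f =ᶠ[𝓝 x] fun _ => 0 := by
    filter_upwards [hconst.eventuallyEq_nhds] with y hy
    rw [hy.deriv_eq, deriv_const]
  rw [hderiv.deriv_eq, deriv_const] at hneg
  exact hneg.false

theorem nonneg_of_iteratedDeriv_two_le_mul {g q : ℝ → ℝ} {a b : ℝ}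
    (hg : ContinuousOn g (Icc a b)) (hq : ∀ x ∈ Ioo a b, 0 < q x)
    (hL : ∀ x ∈ Ioo a b, iteratedDeriv 2 g x ≤ q x * g x) (ha : 0 ≤ g a) (hb : 0 ≤ g b) :
    ∀ x ∈ Icc a b, 0 ≤ g x := by
  by_contra! ⟨x, hx, hgx⟩
  obtain ⟨t, ht, htmin⟩ := isCompact_Icc.exists_isMinOn ⟨x, hx⟩ hg
  have hgt : g t < 0 := (htmin hx).trans_lt hgx
  have ht' : t ∈ Ioo a b := by
    refine ⟨ht.1.lt_of_ne ?_, ht.2.lt_of_ne ?_⟩ <;> rintro rfl <;> linarith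
  have hnhds : Icc a b ∈ 𝓝 t := Icc_mem_nhds ht'.1 ht'.2
  have hsecond := (htmin.isLocalMin hnhds).deriv_deriv_nonneg (hg.continuousAt hnhds)
  rw [← iteratedDeriv_one, ← iteratedDeriv_succ'] at hsecond
  nlinarith [hL t ht', hq t ht']

theorem hasDerivAt_cosh_rpow (δ x : ℝ) :
    HasDerivAt (fun y => cosh y ^ δ) (δ * cosh x ^ (δ - 1) * sinh x) x := by
  convert (hasDerivAt_cosh x).rpow_const (p := δ) (Or.inl (cosh_pos x).ne') using 1
  ring

theorem iteratedDeriv_two_cosh_rpow (δ x : ℝ) :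
    iteratedDeriv 2 (fun y => cosh y ^ δ) x
      = δ * (δ - 1) * cosh x ^ (δ - 2) * sinh x ^ 2 + δ * cosh x ^ δ := by
  have hderiv : deriv (fun y => cosh y ^ δ) = fun y => δ * cosh y ^ (δ - 1) * sinh y :=
    funext fun y => (hasDerivAt_cosh_rpow δ y).deriv
  have h := (((hasDerivAt_cosh x).rpow_const (p := δ - 1) (Or.inl (cosh_pos x).ne')).const_mul
    δ).fun_mul (hasDerivAt_sinh x)
  rw [iteratedDeriv_succ, iteratedDeriv_one, hderiv, h.deriv]
  have hsplit : cosh x ^ (δ - 1) = cosh x ^ (δ - 2) * cosh x := by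
    rw [← rpow_add_one (cosh_pos x).ne']; ring_nf
  rw [show δ - 1 - 1 = δ - 2 by ring, hsplit, show cosh x ^ δ = cosh x ^ (δ - 2) * cosh x ^ 2 by
    rw [← rpow_natCast, ← rpow_add (cosh_pos x)]; norm_num]
  ring

theorem iteratedDeriv_two_cosh_rpow_add_le {δ : ℝ} (hδ : δ ∈ Icc (-1) 2) (x : ℝ) :
    iteratedDeriv 2 (fun y => cosh y ^ δ) x + 2 / cosh x ^ 2 * cosh x ^ δ
      ≤ (2 + δ) * cosh x ^ δ := by
  have hcosh := cosh_pos x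
  have hsplit : cosh x ^ δ = cosh x ^ (δ - 2) * cosh x ^ 2 := by
    rw [← rpow_natCast, ← rpow_add hcosh]; norm_num
  have hmono : cosh x ^ (δ - 2) ≤ cosh x ^ δ :=
    rpow_le_rpow_of_exponent_le (one_le_cosh x) (by linarith)
  have hcoef : 0 ≤ (2 - δ) * (1 + δ) := mul_nonneg (by linarith [hδ.2]) (by linarith [hδ.1])
  have hpot : 2 / cosh x ^ 2 * cosh x ^ δ = 2 * cosh x ^ (δ - 2) := by
    rw [hsplit]; field_simp
  rw [iteratedDeriv_two_cosh_rpow, sinh_sq, hpot]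
  linear_combination (-δ * (δ - 1)) * hsplit + mul_le_mul_of_nonneg_left hmono hcoef

theorem le_cosh_rpow_div_of_neg_cosh_rpow_le {δ n a b : ℝ} {w : ℝ → ℝ} (hδ : δ ∈ Icc 0 2)
    (hn : 2 + δ < n ^ 2) (hw : ContDiffOn ℝ 2 w (Icc a b))
    (hL : ∀ x ∈ Ioo a b,
      -cosh x ^ δ ≤ iteratedDeriv 2 w x - n ^ 2 * w x + 2 / cosh x ^ 2 * w x)
    (ha : w a ≤ 0) (hb : w b ≤ 0) :
    ∀ x ∈ Icc a b, w x ≤ cosh x ^ δ / (n ^ 2 - 2 - δ) := by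
  have hC : 0 < n ^ 2 - 2 - δ := by linarith
  have hV : ContDiff ℝ 2 fun y => cosh y ^ δ :=
    contDiff_cosh.rpow_const_of_ne fun y => (cosh_pos y).ne'
  have hV_pos (x : ℝ) : 0 < cosh x ^ δ / (n ^ 2 - 2 - δ) := by
    have := cosh_pos x; positivity
  have hgap := nonneg_of_iteratedDeriv_two_le_mul
    (g := fun x => cosh x ^ δ / (n ^ 2 - 2 - δ) - w x) (q := fun x => n ^ 2 - 2 / cosh x ^ 2)
    ((hV.continuous.div_const _).continuousOn.sub hw.continuousOn) ?_ ?_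
    (by linarith [hV_pos a]) (by linarith [hV_pos b])
  · intro x hx
    linarith [hgap x hx]
  · intro x _
    have : 2 / cosh x ^ 2 ≤ 2 := div_le_self zero_le_two (one_le_pow₀ (one_le_cosh x))
    linarith [hδ.1]
  · intro x hx
    have hw_at : ContDiffAt ℝ 2 w x := hw.contDiffAt (Icc_mem_nhds hx.1 hx.2)
    rw [iteratedDeriv_fun_sub (hV.contDiffAt.div_const _) hw_at, iteratedDeriv_div_const]
    have hsuper := iteratedDeriv_two_cosh_rpow_add_le ⟨by linarith [hδ.1], hδ.2⟩ x
    have hsplit : cosh x ^ δ = (n ^ 2 - 2 - δ) * (cosh x ^ δ / (n ^ 2 - 2 - δ)) := by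
      field_simp
    have hsuper' : iteratedDeriv 2 (fun y => cosh y ^ δ) x / (n ^ 2 - 2 - δ)
        + 2 / cosh x ^ 2 * (cosh x ^ δ / (n ^ 2 - 2 - δ))
        ≤ (2 + δ) * (cosh x ^ δ / (n ^ 2 - 2 - δ)) := by
      rw [← mul_div_assoc, ← mul_div_assoc, ← add_div]
      exact div_le_div_of_nonneg_right hsuper hC.le
    linarith [hL x hx]

theorem mode_estimate_truncated_catenoid_general (δ : ℝ) (hδ : δ ∈ Set.Ioo (1:ℝ) 2)
    (s₀ : ℝ) (n : ℤ) (hn : 2 ≤ |n|) (w f : ℝ → ℝ)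
    (hw : ContDiffOn ℝ 2 w (Icc (-s₀) s₀))
    (heq : ∀ s ∈ Icc (-s₀) s₀,
      iteratedDerivWithin 2 w (Icc (-s₀) s₀) s - (n : ℝ) ^ 2 * w s
        + (2 / (Real.cosh s) ^ 2) * w s = f s)
    (hf : ∀ s ∈ Icc (-s₀) s₀, |f s| ≤ Real.cosh s ^ δ)
    (hb1 : w s₀ = 0) (hb2 : w (-s₀) = 0) :
    ∀ s ∈ Icc (-s₀) s₀, |w s| ≤ Real.cosh s ^ δ / ((n : ℝ) ^ 2 - 2 - δ) := by
  have hδ' : δ ∈ Icc 0 2 := ⟨by linarith [hδ.1], hδ.2.le⟩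
  have hn' : 2 + δ < (n : ℝ) ^ 2 := by
    have : (2 : ℝ) ≤ |(n : ℝ)| := by exact_mod_cast hn
    nlinarith [sq_abs (n : ℝ), hδ.2]
  have hL : ∀ x ∈ Ioo (-s₀) s₀,
      iteratedDeriv 2 w x - (n : ℝ) ^ 2 * w x + 2 / cosh x ^ 2 * w x = f x := by
    intro x hx
    rw [← heq x (Ioo_subset_Icc_self hx), iteratedDerivWithin_eq_iteratedDeriv
      (uniqueDiffOn_Icc (hx.1.trans hx.2)) (hw.contDiffAt (Icc_mem_nhds hx.1 hx.2))
      (Ioo_subset_Icc_self hx)]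
  intro s hs
  have hupper := le_cosh_rpow_div_of_neg_cosh_rpow_le hδ' hn' hw
    (fun x hx => hL x hx ▸ (abs_le.mp (hf x (Ioo_subset_Icc_self hx))).1) hb2.le hb1.le s hs
  have hlower := le_cosh_rpow_div_of_neg_cosh_rpow_le (w := fun x => -w x) hδ' hn' hw.neg
    (fun x hx => by
      rw [iteratedDeriv_fun_neg]
      linarith [hL x hx, (abs_le.mp (hf x (Ioo_subset_Icc_self hx))).2])
    (by simp [hb2]) (by simp [hb1]) s hs
  exact abs_le.mpr ⟨by linarith, hupper⟩

/-- Maximum-principle estimate: if `w` is C² on `[−s₀,s₀]`, solves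
`w'' − n² w + (2/cosh² s) w = f` with `|f| ≤ (cosh s)^δ` and `w(±s₀) = 0`, then
`|w(s)| ≤ (cosh s)^δ/(n² − 2 − δ)` on `[−s₀,s₀]`. -/
theorem mode_estimate_truncated_catenoid (δ : ℝ) (hδ : δ ∈ Set.Ioo (1:ℝ) 2)
    (s₀ : ℝ) (hs₀ : 0 < s₀) (n : ℤ) (hn : 2 ≤ |n|) (w f : ℝ → ℝ)
    (hw : ContDiffOn ℝ 2 w (Icc (-s₀) s₀))
    (heq : ∀ s ∈ Icc (-s₀) s₀,
      iteratedDerivWithin 2 w (Icc (-s₀) s₀) s - (n : ℝ) ^ 2 * w s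
        + (2 / (Real.cosh s) ^ 2) * w s = f s)
    (hf : ∀ s ∈ Icc (-s₀) s₀, |f s| ≤ Real.cosh s ^ δ)
    (hb1 : w s₀ = 0) (hb2 : w (-s₀) = 0) :
    ∀ s ∈ Icc (-s₀) s₀, |w s| ≤ Real.cosh s ^ δ / ((n : ℝ) ^ 2 - 2 - δ) :=
  mode_estimate_truncated_catenoid_general δ hδ s₀ n hn w f hw heq hf hb1 hb2
end

section
/- Let δ' ∈ (−1, 0), s₀ > 0, and let n be an integer with |n| ≥ 1. If w is a C² function on [s₀, ∞) with w'' − n² w = f, |f(s)| ≤ e^{δ' s}, w(s₀) = 0, and w bounded, then |w(s)| ≤ 2 e^{δ' s}/(n² − δ'²) for all s ≥ s₀. -/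
/-!
`C e^{δ's}` with `C = 2 / (n² - δ'²)` is a supersolution: `(d² - n²)(C e^{δ's}) = -2 e^{δ's}`.
Hence `h = ±w - C e^{δ's}` satisfies `h'' ≥ n² h`, `h(s₀) ≤ 0`, and is bounded above, and the
maximum principle for `d² - N` (`N ≥ 1`) on a half-line gives `h ≤ 0`. For the maximum principle,
subtract `ε eˢ` so that the function tends to `-∞`: a positive value would then produce an interior
maximum at which the second derivative is positive.
-/

open Real Set Filter Topology

theorem IsLocalMax.deriv_deriv_nonpos {g : ℝ → ℝ} {t : ℝ} (hmax : IsLocalMax g t)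
    (hg : ContinuousAt g t) : deriv (deriv g) t ≤ 0 := by
  by_contra! hpos
  have hmin : IsLocalMin g t := isLocalMin_of_deriv_deriv_pos hpos hmax.deriv_eq_zero hg
  have hconst : g =ᶠ[𝓝 t] fun _ => g t :=
    (hmin.and hmax).mono fun _ hx => le_antisymm hx.2 hx.1
  have hzero : deriv g =ᶠ[𝓝 t] fun _ => 0 := by simpa using hconst.deriv
  simp [hzero.deriv_eq] at hpos

theorem nonpos_of_pos_imp_deriv_deriv_pos {g : ℝ → ℝ} {a : ℝ} (hg : ContinuousOn g (Ici a))
    (hconvex : ∀ x ∈ Ioi a, 0 < g x → 0 < deriv (deriv g) x) (ha : g a ≤ 0)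
    (hlim : ∀ᶠ x in atTop, g x ≤ 0) : ∀ x ∈ Ici a, g x ≤ 0 := by
  by_contra! ⟨x₁, hx₁, hpos⟩
  obtain ⟨t, ht, hmax⟩ := hg.exists_isMaxOn' isClosed_Ici hx₁ <| by
    rw [cocompact_eq_atBot_atTop, inf_sup_right]
    refine eventually_sup.2 ⟨?_, (hlim.mono fun x hx => hx.trans hpos.le).filter_mono inf_le_left⟩
    filter_upwards [(eventually_lt_atBot a).filter_mono inf_le_left,
      mem_inf_of_right (mem_principal_self (Ici a))] with x hlt hge
    exact absurd hge (not_le.2 hlt)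
  have hgt : 0 < g t := hpos.trans_le (hmax hx₁)
  have hat : a < t := lt_of_le_of_ne ht (by rintro rfl; linarith)
  exact (hconvex t hat hgt).not_ge <| (hmax.isLocalMax (Ici_mem_nhds hat)).deriv_deriv_nonpos
    ((hg t ht).continuousAt (Ici_mem_nhds hat))

theorem nonpos_of_mul_le_second_deriv_of_bddAbove {N a : ℝ} (hN : 1 ≤ N) {h h' h'' : ℝ → ℝ}
    (hc : ContinuousOn h (Ici a)) (hd : ∀ x ∈ Ioi a, HasDerivAt h (h' x) x)
    (hd' : ∀ x ∈ Ioi a, HasDerivAt h' (h'' x) x) (hL : ∀ x ∈ Ioi a, N * h x ≤ h'' x)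
    (ha : h a ≤ 0) (hbdd : BddAbove (h '' Ici a)) : ∀ x ∈ Ici a, h x ≤ 0 := by
  obtain ⟨M, hM⟩ := hbdd
  -- `ε eˣ` forces the function to `-∞` and, as `N ≥ 1`, keeps `h'' > 0` wherever `h > 0`
  have hpert : ∀ ε > 0, ∀ x ∈ Ici a, h x - ε * exp x ≤ 0 := by
    intro ε hε
    refine nonpos_of_pos_imp_deriv_deriv_pos (hc.sub (by fun_prop)) (fun x hx hpos => ?_)
      (by linarith [mul_pos hε (exp_pos a)]) ?_
    · have hderiv : deriv (fun y => h y - ε * exp y) =ᶠ[𝓝 x] fun y => h' y - ε * exp y := by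
        filter_upwards [Ioi_mem_nhds hx] with y hy
        exact ((hd y hy).sub ((hasDerivAt_exp y).const_mul ε)).deriv
      have hderiv2 : HasDerivAt (fun y => h' y - ε * exp y) (h'' x - ε * exp x) x :=
        (hd' x hx).sub ((hasDerivAt_exp x).const_mul ε)
      rw [hderiv.deriv_eq, hderiv2.deriv]
      nlinarith [hL x hx, mul_pos hε (exp_pos x)]
    · filter_upwards [eventually_ge_atTop a,
        (tendsto_exp_atTop.const_mul_atTop hε).eventually_ge_atTop M] with x hx hxM
      linarith [hM (mem_image_of_mem h hx)]
  intro x hx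
  refine le_of_forall_pos_le_add fun ε hε => ?_
  have := hpert (ε / exp x) (by positivity) x hx
  rw [div_mul_cancel₀ _ (exp_pos x).ne'] at this
  linarith

theorem hasDerivAt_const_mul_exp_mul (c δ x : ℝ) :
    HasDerivAt (fun y => c * exp (δ * y)) (c * δ * exp (δ * x)) x := by
  simpa [mul_comm, mul_left_comm, mul_assoc] using (((hasDerivAt_id x).const_mul δ).exp).const_mul c

theorem le_const_mul_exp_of_second_deriv_sub_mul_ge {N δ c a : ℝ} (hN : 1 ≤ N) (hδ : δ ^ 2 < N)
    (hc : 1 ≤ c * (N - δ ^ 2)) {v v' v'' : ℝ → ℝ} (hcont : ContinuousOn v (Ici a))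
    (hd : ∀ x ∈ Ioi a, HasDerivAt v (v' x) x) (hd' : ∀ x ∈ Ioi a, HasDerivAt v' (v'' x) x)
    (hL : ∀ x ∈ Ioi a, -exp (δ * x) ≤ v'' x - N * v x) (ha : v a ≤ 0)
    (hbdd : BddAbove (v '' Ici a)) : ∀ x ∈ Ici a, v x ≤ c * exp (δ * x) := by
  have hc₀ : 0 < c := pos_of_mul_pos_left (one_pos.trans_le hc) (sub_pos.2 hδ).le
  obtain ⟨M, hM⟩ := hbdd
  have := nonpos_of_mul_le_second_deriv_of_bddAbove hN (h := fun x => v x - c * exp (δ * x))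
    (h' := fun x => v' x - c * δ * exp (δ * x)) (h'' := fun x => v'' x - c * δ * δ * exp (δ * x))
    (hcont.sub (by fun_prop)) (fun x hx => (hd x hx).sub (hasDerivAt_const_mul_exp_mul _ _ x))
    (fun x hx => (hd' x hx).sub (hasDerivAt_const_mul_exp_mul _ _ x))
    (fun x hx => by nlinarith [hL x hx, exp_pos (δ * x)])
    (by nlinarith [exp_pos (δ * a)])
    ⟨M, forall_mem_image.2 fun x hx => by nlinarith [hM (mem_image_of_mem v hx), exp_pos (δ * x)]⟩
  exact fun x hx => sub_nonpos.1 (this x hx)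

theorem ContDiffOn.hasDerivAt_derivWithin_of_mem_nhds {𝕜 F : Type*} [NontriviallyNormedField 𝕜]
    [NormedAddCommGroup F] [NormedSpace 𝕜 F] {f : 𝕜 → F} {s : Set 𝕜} {x : 𝕜}
    (hf : ContDiffOn 𝕜 2 f s) (hs : UniqueDiffOn 𝕜 s) (hx : s ∈ 𝓝 x) :
    HasDerivAt f (derivWithin f s x) x ∧
      HasDerivAt (derivWithin f s) (iteratedDerivWithin 2 f s x) x := by
  have hf' : ContDiffOn 𝕜 1 (derivWithin f s) s := hf.derivWithin hs (by norm_num)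
  have hxs := mem_of_mem_nhds hx
  refine ⟨((hf.differentiableOn (by norm_num)) x hxs).hasDerivWithinAt.hasDerivAt hx, ?_⟩
  simpa [iteratedDerivWithin_eq_iterate] using
    ((hf'.differentiableOn (by norm_num)) x hxs).hasDerivWithinAt.hasDerivAt hx

theorem half_cylinder_mode_estimate_general (δ' : ℝ) (hδ' : δ' ∈ Set.Ioo (-1 : ℝ) 0)
    (s₀ : ℝ) (n : ℤ) (hn : 1 ≤ |n|) (w f : ℝ → ℝ)
    (hw : ContDiffOn ℝ 2 w (Ici s₀))
    (heq : ∀ s ∈ Ici s₀,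
      iteratedDerivWithin 2 w (Ici s₀) s - (n : ℝ) ^ 2 * w s = f s)
    (hf : ∀ s ∈ Ici s₀, |f s| ≤ Real.exp (δ' * s))
    (hb : w s₀ = 0)
    (hbdd : ∃ M : ℝ, ∀ s ∈ Ici s₀, |w s| ≤ M) :
    ∀ s ∈ Ici s₀, |w s| ≤ 2 * Real.exp (δ' * s) / ((n : ℝ) ^ 2 - δ' ^ 2) := by
  obtain ⟨M, hM⟩ := hbdd
  have hN : 1 ≤ (n : ℝ) ^ 2 := (one_le_sq_iff_one_le_abs _).2 (by exact_mod_cast hn)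
  have hδ : δ' ^ 2 < (n : ℝ) ^ 2 := by nlinarith [hδ'.1, hδ'.2]
  have hc : 1 ≤ 2 / ((n : ℝ) ^ 2 - δ' ^ 2) * ((n : ℝ) ^ 2 - δ' ^ 2) := by
    rw [div_mul_cancel₀ _ (sub_pos.2 hδ).ne']; norm_num
  have hd (x) (hx : x ∈ Ioi s₀) :=
    hw.hasDerivAt_derivWithin_of_mem_nhds (uniqueDiffOn_Ici s₀) (Ici_mem_nhds hx)
  have hode (x) (hx : x ∈ Ioi s₀) :
      |iteratedDerivWithin 2 w (Ici s₀) x - (n : ℝ) ^ 2 * w x| ≤ exp (δ' * x) :=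
    heq x (mem_Ici_of_Ioi hx) ▸ hf x (mem_Ici_of_Ioi hx)
  have upper := le_const_mul_exp_of_second_deriv_sub_mul_ge hN hδ hc hw.continuousOn
    (fun x hx => (hd x hx).1) (fun x hx => (hd x hx).2)
    (fun x hx => (abs_le.1 (hode x hx)).1)
    hb.le ⟨M, forall_mem_image.2 fun x hx => (abs_le.1 (hM x hx)).2⟩
  have lower := le_const_mul_exp_of_second_deriv_sub_mul_ge (v := fun x => -w x) hN hδ hc
    hw.continuousOn.neg (fun x hx => (hd x hx).1.neg) (fun x hx => (hd x hx).2.neg)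
    (fun x hx => by linarith [(abs_le.1 (hode x hx)).2])
    (by simp [hb]) ⟨M, forall_mem_image.2 fun x hx => by linarith [(abs_le.1 (hM x hx)).1]⟩
  intro s hs
  rw [abs_le, mul_div_right_comm]
  exact ⟨neg_le.1 (lower s hs), upper s hs⟩

/-- Mode estimate on the half-infinite cylinder: if `w'' − n² w = f` on `[s₀,∞)` with
`|f(s)| ≤ e^{δ's}`, `w(s₀) = 0` and `w` bounded, and `δ' ∈ (−1,0)`, `|n| ≥ 1`, then
`|w(s)| ≤ 2e^{δ's}/(n² − δ'²)` for all `s ≥ s₀`. -/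
theorem half_cylinder_mode_estimate (δ' : ℝ) (hδ' : δ' ∈ Set.Ioo (-1 : ℝ) 0)
    (s₀ : ℝ) (hs₀ : 0 < s₀) (n : ℤ) (hn : 1 ≤ |n|) (w f : ℝ → ℝ)
    (hw : ContDiffOn ℝ 2 w (Ici s₀))
    (heq : ∀ s ∈ Ici s₀,
      iteratedDerivWithin 2 w (Ici s₀) s - (n : ℝ) ^ 2 * w s = f s)
    (hf : ∀ s ∈ Ici s₀, |f s| ≤ Real.exp (δ' * s))
    (hb : w s₀ = 0)
    (hbdd : ∃ M : ℝ, ∀ s ∈ Ici s₀, |w s| ≤ M) :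
    ∀ s ∈ Ici s₀, |w s| ≤ 2 * Real.exp (δ' * s) / ((n : ℝ) ^ 2 - δ' ^ 2) :=
  half_cylinder_mode_estimate_general δ' hδ' s₀ n hn w f hw heq hf hb hbdd
end

section
/- Let f₀ : [s₀,∞) → ℝ be continuous with |f₀(s)| ≤ e^{δ' s} for some δ' < 0. Then with c₀ = −∫_{s₀}^∞ ∫_t^∞ f₀(u) du dt, the function w₀(s) = c₀ + ∫_s^∞ ∫_t^∞ f₀(u) du dt satisfies w₀'' = f₀ on (s₀,∞), w₀(s₀) = 0, |c₀| ≤ e^{δ' s₀}/δ'², and |w₀(s) − c₀| ≤ e^{δ' s}/δ'² for all s ≥ s₀. -/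
open Real Set MeasureTheory Filter Topology

/-! A tail integral `s ↦ ∫_s^∞ g` has derivative `-g` wherever `g` is continuous, and integrating
a bound `C e^{δ' u}` over `[s, ∞)` divides it by `-δ'`; applying both facts twice gives `w₀'' = f₀`
and the bound `e^{δ' s} / δ'²`. -/

theorem iteratedDeriv_two_eq_of_hasDerivAt {𝕜 F : Type*} [NontriviallyNormedField 𝕜]
    [NormedAddCommGroup F] [NormedSpace 𝕜 F] {f f' : 𝕜 → F} {x : 𝕜} {f'' : F}
    (hf : ∀ᶠ y in 𝓝 x, HasDerivAt f (f' y) y) (hf' : HasDerivAt f' f'' x) :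
    iteratedDeriv 2 f x = f'' := by
  rw [iteratedDeriv_succ, iteratedDeriv_one]
  exact (hf'.congr_of_eventuallyEq (hf.mono fun _ hy => hy.deriv)).deriv

theorem hasDerivAt_integral_Ici {E : Type*} [NormedAddCommGroup E] [NormedSpace ℝ E]
    [CompleteSpace E] {f : ℝ → E} {a x : ℝ} (hf : IntegrableOn f (Ici a)) (hax : a < x)
    (hfx : ContinuousAt f x) :
    HasDerivAt (fun s => ∫ t in Ici s, f t) (-f x) x := by
  have hfIoi : IntegrableOn f (Ioi a) := hf.mono_set Ioi_subset_Ici_self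
  have hprimitive : HasDerivAt (fun s => ∫ t in a..s, f t) (f x) x :=
    intervalIntegral.integral_hasDerivAt_right
      ((intervalIntegrable_iff_integrableOn_Ioc_of_le hax.le).2
        (hfIoi.mono_set Ioc_subset_Ioi_self))
      (AEStronglyMeasurable.stronglyMeasurableAtFilter_of_mem hfIoi.aestronglyMeasurable
        (Ioi_mem_nhds hax)) hfx
  have htail : (fun s => (∫ t in Ioi a, f t) - ∫ t in a..s, f t) =ᶠ[𝓝 x]
      fun s => ∫ t in Ici s, f t := by
    filter_upwards [Ioi_mem_nhds hax] with s hs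
    rw [integral_Ici_eq_integral_Ioi, ← intervalIntegral.integral_Ioi_sub_Ioi hfIoi hs.le]
    exact sub_sub_cancel _ _
  simpa using (hprimitive.const_sub _).congr_of_eventuallyEq htail.symm

section ExponentialBound

variable {δ C t : ℝ} {g : ℝ → ℝ}

theorem integrableOn_exp_mul_Ici (hδ : δ < 0) (t : ℝ) :
    IntegrableOn (fun u => exp (δ * u)) (Ici t) :=
  (integrableOn_exp_mul_Ioi hδ t).congr_set_ae Ioi_ae_eq_Ici.symm

theorem integrableOn_Ici_of_abs_le_exp (hδ : δ < 0)
    (hg : AEStronglyMeasurable g (volume.restrict (Ici t)))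
    (hbound : ∀ u ∈ Ici t, |g u| ≤ C * exp (δ * u)) : IntegrableOn g (Ici t) := by
  refine Integrable.mono' ((integrableOn_exp_mul_Ici hδ t).const_mul C) hg ?_
  filter_upwards [ae_restrict_mem measurableSet_Ici] with u hu
  exact hbound u hu

theorem abs_integral_Ici_le_of_abs_le_exp (hδ : δ < 0)
    (hbound : ∀ u ∈ Ici t, |g u| ≤ C * exp (δ * u)) :
    |∫ u in Ici t, g u| ≤ C * exp (δ * t) / -δ := by
  calc |∫ u in Ici t, g u|
      ≤ ∫ u in Ici t, C * exp (δ * u) :=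
        norm_integral_le_of_norm_le (f := g) ((integrableOn_exp_mul_Ici hδ t).const_mul C)
          ((ae_restrict_mem measurableSet_Ici).mono fun u hu => hbound u hu)
    _ = C * exp (δ * t) / -δ := by
        rw [integral_const_mul, integral_Ici_eq_integral_Ioi, integral_exp_mul_Ioi hδ]
        ring

end ExponentialBound

/-- The `n = 0` mode on the half-infinite cylinder: with
`c₀ = −∫_{s₀}^∞ ∫_t^∞ f₀(u) du dt` and `w₀(s) = c₀ + ∫_s^∞ ∫_t^∞ f₀(u) du dt`,
one has `w₀'' = f₀` on `(s₀,∞)`, `w₀(s₀) = 0`, `|c₀| ≤ e^{δ's₀}/δ'²` and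
`|w₀(s) − c₀| ≤ e^{δ's}/δ'²` for `s ≥ s₀`. -/
theorem half_cylinder_mode_zero (δ' : ℝ) (hδ' : δ' < 0) (s₀ : ℝ) (f₀ : ℝ → ℝ)
    (hf₀ : ContinuousOn f₀ (Ici s₀))
    (hf : ∀ s ∈ Ici s₀, |f₀ s| ≤ Real.exp (δ' * s)) :
    (∀ s ∈ Ioi s₀,
      iteratedDeriv 2
          (fun s' : ℝ =>
            (-(∫ t in Ici s₀, ∫ u in Ici t, f₀ u))
              + ∫ t in Ici s', ∫ u in Ici t, f₀ u) s = f₀ s)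
    ∧
    ((-(∫ t in Ici s₀, ∫ u in Ici t, f₀ u))
        + (∫ t in Ici s₀, ∫ u in Ici t, f₀ u) = 0)
    ∧
    |(-(∫ t in Ici s₀, ∫ u in Ici t, f₀ u))| ≤ Real.exp (δ' * s₀) / δ' ^ 2
    ∧
    (∀ s ∈ Ici s₀,
      |∫ t in Ici s, ∫ u in Ici t, f₀ u| ≤ Real.exp (δ' * s) / δ' ^ 2) := by
  set F : ℝ → ℝ := fun t => ∫ u in Ici t, f₀ u
  have hf₀int : IntegrableOn f₀ (Ici s₀) :=
    integrableOn_Ici_of_abs_le_exp (C := 1) hδ' (hf₀.aestronglyMeasurable measurableSet_Ici)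
      (by simpa using hf)
  have hFcont : ContinuousOn F (Ici s₀) := by
    simpa only [F, integral_Ici_eq_integral_Ioi] using
      (hf₀int.mono_set Ioi_subset_Ici_self).continuousOn_Ici_primitive_Ioi
  have hFbound : ∀ t ∈ Ici s₀, |F t| ≤ (-δ')⁻¹ * exp (δ' * t) := fun t ht => by
    have h := abs_integral_Ici_le_of_abs_le_exp (C := 1) (t := t) hδ'
      fun u hu => by simpa using hf u (ht.out.trans hu)
    rwa [one_mul, div_eq_inv_mul] at h
  have hGbound : ∀ s ∈ Ici s₀, |∫ t in Ici s, F t| ≤ exp (δ' * s) / δ' ^ 2 := fun s hs =>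
    (abs_integral_Ici_le_of_abs_le_exp hδ' fun t ht => hFbound t (hs.out.trans ht)).trans_eq
      (by field_simp)
  have hFint : IntegrableOn F (Ici s₀) :=
    integrableOn_Ici_of_abs_le_exp hδ' (hFcont.aestronglyMeasurable measurableSet_Ici) hFbound
  refine ⟨fun s hs => ?_, neg_add_cancel _, by rw [abs_neg]; exact hGbound s₀ self_mem_Ici,
    hGbound⟩
  apply iteratedDeriv_two_eq_of_hasDerivAt (f' := fun x => -F x)
  · filter_upwards [Ioi_mem_nhds hs] with y hy
    simpa using (hasDerivAt_integral_Ici hFint hy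
      (hFcont.continuousAt (Ici_mem_nhds hy))).const_add (-∫ t in Ici s₀, F t)
  · simpa using (hasDerivAt_integral_Ici hf₀int hs (hf₀.continuousAt (Ici_mem_nhds hs))).fun_neg
end

section
/- Let H₀ ≠ 0 and let α₁, β₁, α₂, β₂ be real numbers with β₁ = H₀ − α₁ and β₂ = H₀ − α₂. If (α₁α₂ + β₁β₂) = (α₁β₂ + β₁α₂) = −(α₁β₁ + α₂β₂), then either (α₁, β₁) = (H₀/2, H₀/2) and {α₂, β₂} = {3H₀/2, −H₀/2}, or (α₂, β₂) = (H₀/2, H₀/2) and {α₁, β₁} = {3H₀/2, −H₀/2}. -/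
/-!
The first equation factors as `(α₁ - β₁) * (α₂ - β₂) = 0`, so one of the two points is umbilic,
say `α₁ = β₁ = H₀ / 2`. The second equation then says that the curvatures of the other point have
sum `H₀` and product `-3 H₀² / 4`, i.e. they are the roots `3 H₀ / 2` and `-H₀ / 2` of
`t² - H₀ t - 3 H₀² / 4`.
-/

lemma curvatures_of_sum_of_prod_eq_neg_three_quarters_sq {H α β : ℝ} (hsum : β = H - α) (hprod : α * β = -(3 * H ^ 2 / 4)) :
    (α = 3 * H / 2 ∧ β = -H / 2) ∨ (α = -H / 2 ∧ β = 3 * H / 2) := by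
  have hroots : (α - 3 * H / 2) * (α + H / 2) = 0 := by
    subst hsum
    linear_combination -hprod
  rcases mul_eq_zero.mp hroots with h | h
  · exact Or.inl ⟨by linarith, by linarith⟩
  · exact Or.inr ⟨by linarith, by linarith⟩

lemma sub_mul_sub_eq_zero_of_degenerate {α₁ β₁ α₂ β₂ : ℝ}
    (e1 : α₁ * α₂ + β₁ * β₂ = α₁ * β₂ + β₁ * α₂) : (α₁ - β₁) * (α₂ - β₂) = 0 := by
  linear_combination e1

lemma degenerate_of_umbilic {H α₁ β₁ α₂ β₂ : ℝ} (h1 : β₁ = H - α₁) (h2 : β₂ = H - α₂)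
    (humb : α₁ = β₁) (e2 : α₁ * β₂ + β₁ * α₂ = -(α₁ * β₁ + α₂ * β₂)) :
    α₁ = H / 2 ∧ β₁ = H / 2 ∧
      ((α₂ = 3 * H / 2 ∧ β₂ = -H / 2) ∨ (α₂ = -H / 2 ∧ β₂ = 3 * H / 2)) := by
  have hα₁ : α₁ = H / 2 := by linarith
  have hβ₁ : β₁ = H / 2 := by linarith
  refine ⟨hα₁, hβ₁, curvatures_of_sum_of_prod_eq_neg_three_quarters_sq h2 ?_⟩
  subst hα₁ hβ₁ h2
  linear_combination e2

theorem degenerate_angle_polynomial_general (H₀ α₁ β₁ α₂ β₂ : ℝ)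
    (h1 : β₁ = H₀ - α₁) (h2 : β₂ = H₀ - α₂)
    (e1 : α₁ * α₂ + β₁ * β₂ = α₁ * β₂ + β₁ * α₂)
    (e2 : α₁ * β₂ + β₁ * α₂ = -(α₁ * β₁ + α₂ * β₂)) :
    (α₁ = H₀ / 2 ∧ β₁ = H₀ / 2 ∧
      ((α₂ = 3 * H₀ / 2 ∧ β₂ = -H₀ / 2) ∨ (α₂ = -H₀ / 2 ∧ β₂ = 3 * H₀ / 2)))
    ∨
    (α₂ = H₀ / 2 ∧ β₂ = H₀ / 2 ∧
      ((α₁ = 3 * H₀ / 2 ∧ β₁ = -H₀ / 2) ∨ (α₁ = -H₀ / 2 ∧ β₁ = 3 * H₀ / 2))) := by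
  rcases mul_eq_zero.mp (sub_mul_sub_eq_zero_of_degenerate e1) with humb | humb
  · exact Or.inl (degenerate_of_umbilic h1 h2 (sub_eq_zero.mp humb) e2)
  · exact Or.inr (degenerate_of_umbilic h2 h1 (sub_eq_zero.mp humb) (by linear_combination e2))

/-- If two CMC surfaces with mean curvature `H₀ = αᵢ + βᵢ` satisfy the identical
degeneracy of the angle polynomial, i.e.
`α₁α₂ + β₁β₂ = α₁β₂ + β₁α₂ = −(α₁β₁ + α₂β₂)`, then one point is umbilic with
curvatures `(H₀/2, H₀/2)` and the other has curvatures `{3H₀/2, −H₀/2}`. -/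
theorem degenerate_angle_polynomial (H₀ α₁ β₁ α₂ β₂ : ℝ) (hH₀ : H₀ ≠ 0)
    (h1 : β₁ = H₀ - α₁) (h2 : β₂ = H₀ - α₂)
    (e1 : α₁ * α₂ + β₁ * β₂ = α₁ * β₂ + β₁ * α₂)
    (e2 : α₁ * β₂ + β₁ * α₂ = -(α₁ * β₁ + α₂ * β₂)) :
    (α₁ = H₀ / 2 ∧ β₁ = H₀ / 2 ∧
      ((α₂ = 3 * H₀ / 2 ∧ β₂ = -H₀ / 2) ∨ (α₂ = -H₀ / 2 ∧ β₂ = 3 * H₀ / 2)))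
    ∨
    (α₂ = H₀ / 2 ∧ β₂ = H₀ / 2 ∧
      ((α₁ = 3 * H₀ / 2 ∧ β₁ = -H₀ / 2) ∨ (α₁ = -H₀ / 2 ∧ β₁ = 3 * H₀ / 2))) :=
  degenerate_angle_polynomial_general H₀ α₁ β₁ α₂ β₂ h1 h2 e1 e2
end

section
/- Let w ∈ C²(ℝ × S¹) satisfy ∂²_{ss}w + ∂²_{θθ}w + (2/cosh²s)w = 0 on ℝ × S¹ and suppose all Fourier coefficients w_n(s) = (1/2π)∫ w(s,θ)e^{−inθ}dθ with |n| ≥ 2 decay exponentially as s → ±∞ together with their first derivatives. Then w_n ≡ 0 for all |n| ≥ 2. -/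
/-!
Differentiating under the integral sign and integrating by parts twice in `θ`, the Jacobi
equation becomes the ODE `f'' = (n² - 2 / cosh² s) f` for the Fourier coefficient `f = w_n`.
For `|n| ≥ 2` the potential is nonnegative, so `‖f‖²` is convex, its second derivative being
`2‖f'‖² + 2 (n² - 2 / cosh² s) ‖f‖²`; a convex function tending to `0` at `±∞` is `≤ 0`.
-/

open Real Complex intervalIntegral

/-- The `n`-th Fourier coefficient in `θ` of a function on the cylinder. -/
noncomputable def cylFourierCoeff (w : ℝ → ℝ → ℂ) (n : ℤ) (s : ℝ) : ℂ :=
  (1 / (2 * (Real.pi : ℂ))) *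
    ∫ θ in (0:ℝ)..(2 * Real.pi), w s θ * Complex.exp (-Complex.I * n * θ)

open Set Filter Topology Function
open scoped RealInnerProductSpace

section DecayingSolutions

variable {E : Type*} [NormedAddCommGroup E] [InnerProductSpace ℝ E]

theorem ConvexOn.le_of_tendsto_atBot_of_tendsto_atTop {v : ℝ → ℝ} {c : ℝ}
    (hv : ConvexOn ℝ univ v) (hbot : Tendsto v atBot (𝓝 c)) (htop : Tendsto v atTop (𝓝 c))
    (x : ℝ) : v x ≤ c := by
  have hmax : Tendsto (fun R => max (v (x + -R)) (v (x + R))) atTop (𝓝 (max c c)) :=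
    (hbot.comp (tendsto_atBot_add_const_left _ x tendsto_neg_atTop_atBot)).max
      (htop.comp (tendsto_atTop_add_const_left _ x tendsto_id))
  rw [max_self] at hmax
  refine ge_of_tendsto hmax ((eventually_ge_atTop 0).mono fun R hR => ?_)
  refine hv.le_on_segment (mem_univ _) (mem_univ _) ?_
  rw [segment_eq_Icc (by linarith)]
  constructor <;> linarith

theorem convexOn_norm_sq_of_hasDerivAt_eq_smul {f f' : ℝ → E} {q : ℝ → ℝ}
    (hf : ∀ s, HasDerivAt f (f' s) s) (hf' : ∀ s, HasDerivAt f' (q s • f s) s)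
    (hq : ∀ s, 0 ≤ q s) : ConvexOn ℝ univ (fun s => ‖f s‖ ^ 2) := by
  have hd1 : ∀ s, HasDerivAt (fun s => ‖f s‖ ^ 2) (2 * ⟪f s, f' s⟫) s :=
    fun s => (hf s).norm_sq
  have hd2 : ∀ s, HasDerivAt (fun s => 2 * ⟪f s, f' s⟫)
      (2 * (q s * ‖f s‖ ^ 2 + ‖f' s‖ ^ 2)) s := by
    intro s
    refine (((hf s).inner ℝ (hf' s)).const_mul 2).congr_deriv ?_
    rw [real_inner_smul_right, real_inner_self_eq_norm_sq, real_inner_self_eq_norm_sq]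
  have hderiv : deriv (fun s => ‖f s‖ ^ 2) = fun s => 2 * ⟪f s, f' s⟫ :=
    funext fun s => (hd1 s).deriv
  refine convexOn_univ_of_deriv2_nonneg (fun s => (hd1 s).differentiableAt)
    (hderiv ▸ fun s => (hd2 s).differentiableAt) fun s => ?_
  rw [iterate_succ_apply, iterate_one, hderiv, (hd2 s).deriv]
  have := hq s
  positivity

theorem eq_zero_of_hasDerivAt_eq_smul_of_tendsto {f f' : ℝ → E} {q : ℝ → ℝ}
    (hf : ∀ s, HasDerivAt f (f' s) s) (hf' : ∀ s, HasDerivAt f' (q s • f s) s)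
    (hq : ∀ s, 0 ≤ q s) (hlim : Tendsto f (cocompact ℝ) (𝓝 0)) (s : ℝ) : f s = 0 := by
  have hsq : Tendsto (fun s => ‖f s‖ ^ 2) (cocompact ℝ) (𝓝 0) := by
    simpa using hlim.norm.pow 2
  rw [cocompact_eq_atBot_atTop] at hsq
  have hle := (convexOn_norm_sq_of_hasDerivAt_eq_smul hf hf' hq)
    |>.le_of_tendsto_atBot_of_tendsto_atTop (hsq.mono_left le_sup_left)
      (hsq.mono_left le_sup_right) s
  simpa using le_antisymm hle (sq_nonneg ‖f s‖)

end DecayingSolutions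

theorem tendsto_cocompact_zero_of_norm_le_mul_exp {F : Type*} [NormedAddCommGroup F]
    {f : ℝ → F} {C a : ℝ} (ha : 0 < a) (hf : ∀ s, ‖f s‖ ≤ C * Real.exp (-a * |s|)) :
    Tendsto f (cocompact ℝ) (𝓝 0) := by
  refine squeeze_zero_norm hf ?_
  have hexp : Tendsto (fun s : ℝ => -a * |s|) (cocompact ℝ) atBot :=
    tendsto_norm_cocompact_atTop.const_mul_atTop_of_neg (neg_lt_zero.2 ha)
  simpa using (Real.tendsto_exp_atBot.comp hexp).const_mul C

section PartialDerivatives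

variable {E : Type*} [NormedAddCommGroup E] [NormedSpace ℝ E] {F : ℝ → ℝ → E}

theorem hasDerivAt_fst_of_differentiableAt_uncurry {s θ : ℝ}
    (hF : DifferentiableAt ℝ (uncurry F) (s, θ)) :
    HasDerivAt (fun s' => F s' θ) (fderiv ℝ (uncurry F) (s, θ) (1, 0)) s :=
  hF.hasFDerivAt.comp_hasDerivAt (f := fun s' : ℝ => (s', θ)) s
    ((hasDerivAt_id s).prodMk (hasDerivAt_const s θ))

theorem ContDiff.uncurry_deriv_fst {m n : WithTop ℕ∞} (hF : ContDiff ℝ m (uncurry F))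
    (hmn : n + 1 ≤ m) : ContDiff ℝ n (uncurry fun s θ => deriv (fun s' => F s' θ) s) := by
  have hdiff : Differentiable ℝ (uncurry F) :=
    hF.differentiable (ne_bot_of_le_ne_bot (by simp) hmn)
  have hpartial : (uncurry fun s θ => deriv (fun s' => F s' θ) s)
      = fun p => fderiv ℝ (uncurry F) p (1, 0) :=
    funext fun p => (hasDerivAt_fst_of_differentiableAt_uncurry (hdiff p)).deriv
  rw [hpartial]
  exact (hF.fderiv_right hmn).clm_apply contDiff_const

-- Continuity of the partial derivative on compact rectangles provides the domination.
theorem hasDerivAt_intervalIntegral_of_contDiff_uncurry [CompleteSpace E] {a b : ℝ}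
    (hF : ContDiff ℝ 1 (uncurry F)) (s : ℝ) :
    HasDerivAt (fun s => ∫ θ in a..b, F s θ) (∫ θ in a..b, deriv (fun s' => F s' θ) s) s := by
  have hcont : Continuous (uncurry F) := hF.continuous
  have hcont' : Continuous (uncurry fun s θ => deriv (fun s' => F s' θ) s) :=
    (hF.uncurry_deriv_fst (n := 0) (by simp)).continuous
  obtain ⟨C, hC⟩ := ((isCompact_Icc (a := s - 1) (b := s + 1)).prod
    (isCompact_uIcc (a := a) (b := b))).exists_bound_of_continuousOn hcont'.continuousOn
  refine (hasDerivAt_integral_of_dominated_loc_of_deriv_le (μ := MeasureTheory.volume)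
    (F := F) (F' := fun s θ => deriv (fun s' => F s' θ) s) (bound := fun _ => C)
    (Metric.ball_mem_nhds s one_pos) ?_ ?_ ?_ ?_ intervalIntegrable_const ?_).2
  · exact Eventually.of_forall fun x =>
      (hcont.comp (Continuous.prodMk_right x)).aestronglyMeasurable
  · exact (hcont.comp (Continuous.prodMk_right s)).intervalIntegrable _ _
  · exact (hcont'.comp (Continuous.prodMk_right s)).aestronglyMeasurable
  · refine Eventually.of_forall fun θ hθ x hx => hC (x, θ) ⟨?_, uIoc_subset_uIcc hθ⟩
    rw [Real.ball_eq_Ioo] at hx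
    exact ⟨hx.1.le, hx.2.le⟩
  · exact Eventually.of_forall fun θ _ x _ =>
      (hasDerivAt_fst_of_differentiableAt_uncurry
        (hF.differentiable one_ne_zero (x, θ))).differentiableAt.hasDerivAt

end PartialDerivatives

theorem Function.Periodic.deriv {𝕜 G : Type*} [NontriviallyNormedField 𝕜]
    [NormedAddCommGroup G] [NormedSpace 𝕜 G] {g : 𝕜 → G} {c : 𝕜} (hg : Periodic g c) :
    Periodic (deriv g) c :=
  fun x => by rw [← deriv_comp_add_const, hg.funext]

section FourierCoefficients

open MeasureTheory (volume)

theorem hasDerivAt_exp_neg_I_mul (n : ℤ) (θ : ℝ) :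
    HasDerivAt (fun θ : ℝ => exp (-I * n * θ)) (-I * n * exp (-I * n * θ)) θ := by
  have h := ((hasDerivAt_id (θ : ℂ)).const_mul (-I * n)).cexp.comp_ofReal
  simpa [mul_comm] using h

theorem exp_neg_I_mul_two_pi (n : ℤ) : exp (-I * n * ↑(2 * π)) = 1 := by
  rw [← exp_int_mul_two_pi_mul_I (-n)]
  push_cast
  ring_nf

-- Periodicity of `g` kills the boundary term of the integration by parts.
theorem integral_deriv_mul_exp_of_periodic {g : ℝ → ℂ} (hg : ContDiff ℝ 1 g)
    (hper : Periodic g (2 * π)) (n : ℤ) :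
    ∫ θ in (0 : ℝ)..2 * π, deriv g θ * exp (-I * n * θ)
      = I * n * ∫ θ in (0 : ℝ)..2 * π, g θ * exp (-I * n * θ) := by
  have hcont : Continuous fun θ : ℝ => exp (-I * n * θ) := by fun_prop
  have hparts := integral_deriv_mul_eq_sub (a := 0) (b := 2 * π)
    (fun θ _ => (hg.differentiable one_ne_zero θ).hasDerivAt)
    (fun θ _ => hasDerivAt_exp_neg_I_mul n θ)
    ((hg.continuous_deriv le_rfl).intervalIntegrable _ _)
    ((continuous_const.mul hcont).intervalIntegrable _ _)
  have hint₁ : IntervalIntegrable (fun θ => deriv g θ * exp (-I * n * θ)) volume 0 (2 * π) :=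
    ((hg.continuous_deriv le_rfl).mul hcont).intervalIntegrable _ _
  have hint₂ :
      IntervalIntegrable (fun θ => g θ * (-I * n * exp (-I * n * θ))) volume 0 (2 * π) :=
    (hg.continuous.mul (continuous_const.mul hcont)).intervalIntegrable _ _
  rw [integral_add hint₁ hint₂] at hparts
  have hboundary : g (2 * π) = g 0 := by simpa using hper 0
  simp only [hboundary, exp_neg_I_mul_two_pi, ofReal_zero, mul_zero, Complex.exp_zero,
    sub_self] at hparts
  have hrearrange : ∫ θ in (0 : ℝ)..2 * π, g θ * (-I * n * exp (-I * n * θ))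
      = -I * n * ∫ θ in (0 : ℝ)..2 * π, g θ * exp (-I * n * θ) := by
    rw [← integral_const_mul]
    exact integral_congr fun θ _ => by ring
  linear_combination hparts - hrearrange

theorem integral_iteratedDeriv_two_mul_exp_of_periodic {g : ℝ → ℂ} (hg : ContDiff ℝ 2 g)
    (hper : Periodic g (2 * π)) (n : ℤ) :
    ∫ θ in (0 : ℝ)..2 * π, iteratedDeriv 2 g θ * exp (-I * n * θ)
      = -(n : ℂ) ^ 2 * ∫ θ in (0 : ℝ)..2 * π, g θ * exp (-I * n * θ) := by
  rw [iteratedDeriv_succ, iteratedDeriv_one,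
    integral_deriv_mul_exp_of_periodic (hg.deriv' (n := 1)) hper.deriv,
    integral_deriv_mul_exp_of_periodic (hg.of_le one_le_two) hper]
  linear_combination (n : ℂ) ^ 2 * (∫ θ in (0 : ℝ)..2 * π, g θ * exp (-I * n * θ)) * I_sq

end FourierCoefficients

section CylinderCoefficients

theorem hasDerivAt_cylFourierCoeff {w : ℝ → ℝ → ℂ} (hw : ContDiff ℝ 1 (uncurry w)) (n : ℤ)
    (s : ℝ) :
    HasDerivAt (cylFourierCoeff w n)
      (cylFourierCoeff (fun s θ => deriv (fun s' => w s' θ) s) n s) s := by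
  have hF : ContDiff ℝ 1 (uncurry fun s θ => w s θ * exp (-I * n * θ)) :=
    hw.mul (((contDiff_const.mul ofRealCLM.contDiff).cexp).comp contDiff_snd)
  have h := (hasDerivAt_intervalIntegral_of_contDiff_uncurry (a := 0) (b := 2 * π) hF s)
    |>.const_mul (1 / (2 * (π : ℂ)))
  simp only [deriv_mul_const_field] at h
  exact h

theorem cylFourierCoeff_deriv_deriv_of_jacobi {w : ℝ → ℝ → ℂ}
    (hw : ContDiff ℝ 2 (uncurry w)) (hper : ∀ s θ, w s (θ + 2 * π) = w s θ)
    (heq : ∀ s θ, iteratedDeriv 2 (fun s' => w s' θ) s + iteratedDeriv 2 (w s) θ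
        + ((2 / Real.cosh s ^ 2 : ℝ) : ℂ) * w s θ = 0) (n : ℤ) (s : ℝ) :
    cylFourierCoeff (fun s θ => deriv (fun s' => deriv (fun s'' => w s'' θ) s') s) n s
      = ((n : ℝ) ^ 2 - 2 / Real.cosh s ^ 2) • cylFourierCoeff w n s := by
  have hslice : ContDiff ℝ 2 (w s) := hw.comp (contDiff_const.prodMk contDiff_id)
  have hcont : Continuous fun θ : ℝ => exp (-I * n * θ) := by fun_prop
  have hpoint : ∀ θ : ℝ, deriv (fun s' => deriv (fun s'' => w s'' θ) s') s * exp (-I * n * θ)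
      = -(iteratedDeriv 2 (w s) θ * exp (-I * n * θ))
        - ((2 / Real.cosh s ^ 2 : ℝ) : ℂ) * (w s θ * exp (-I * n * θ)) := by
    intro θ
    have h := heq s θ
    rw [iteratedDeriv_succ, iteratedDeriv_one] at h
    linear_combination exp (-I * n * θ) * h
  unfold cylFourierCoeff
  rw [integral_congr fun θ _ => hpoint θ, integral_sub, integral_neg, integral_const_mul,
    integral_iteratedDeriv_two_mul_exp_of_periodic hslice (hper s), real_smul]
  · push_cast
    ring
  · exact (((hslice.continuous_iteratedDeriv 2 le_rfl).mul hcont).neg).intervalIntegrable _ _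
  · exact (continuous_const.mul (hslice.continuous.mul hcont)).intervalIntegrable _ _

theorem two_div_cosh_sq_le_two (s : ℝ) : 2 / Real.cosh s ^ 2 ≤ 2 :=
  div_le_self zero_le_two (one_le_pow₀ (one_le_cosh s))

end CylinderCoefficients

/-- If `w` is a C² solution of the catenoid Jacobi equation on `ℝ × S¹` whose Fourier
coefficients of modes `|n| ≥ 2` decay exponentially (with their first derivatives) as
`s → ±∞`, then all these coefficients vanish identically. -/
theorem high_modes_vanish (w : ℝ → ℝ → ℂ)
    (hw : ContDiff ℝ 2 (fun p : ℝ × ℝ => w p.1 p.2))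
    (hper : ∀ s θ : ℝ, w s (θ + 2 * Real.pi) = w s θ)
    (heq : ∀ s θ : ℝ,
      iteratedDeriv 2 (fun s' : ℝ => w s' θ) s
        + iteratedDeriv 2 (w s) θ
        + ((2 / (Real.cosh s) ^ 2 : ℝ) : ℂ) * w s θ = 0)
    (hdecay : ∀ n : ℤ, 2 ≤ |n| →
      ∃ C a : ℝ, 0 < a ∧ ∀ s : ℝ,
        ‖cylFourierCoeff w n s‖ + ‖deriv (cylFourierCoeff w n) s‖
          ≤ C * Real.exp (-a * |s|)) :
    ∀ n : ℤ, 2 ≤ |n| → ∀ s : ℝ, cylFourierCoeff w n s = 0 := by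
  intro n hn s
  obtain ⟨C, a, ha, hC⟩ := hdecay n hn
  have hn_sq : (2 : ℝ) ≤ (n : ℝ) ^ 2 := by
    have : (2 : ℝ) ≤ |(n : ℝ)| := by exact_mod_cast hn
    nlinarith [sq_abs (n : ℝ)]
  have hpotential : ∀ s, 0 ≤ (n : ℝ) ^ 2 - 2 / Real.cosh s ^ 2 := fun s =>
    sub_nonneg.2 ((two_div_cosh_sq_le_two s).trans hn_sq)
  have hdecay_n : Tendsto (cylFourierCoeff w n) (cocompact ℝ) (𝓝 0) :=
    tendsto_cocompact_zero_of_norm_le_mul_exp ha fun s =>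
      (le_add_of_nonneg_right (norm_nonneg _)).trans (hC s)
  refine eq_zero_of_hasDerivAt_eq_smul_of_tendsto
    (hasDerivAt_cylFourierCoeff (hw.of_le one_le_two) n) (fun s => ?_) hpotential hdecay_n s
  rw [← cylFourierCoeff_deriv_deriv_of_jacobi hw hper heq n s]
  exact hasDerivAt_cylFourierCoeff (hw.uncurry_deriv_fst (by norm_num)) n s
end
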